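/- arXiv:2107.05423 — 4 statements merged into one kernel-verified Lean document; each statement's English description precedes it below -/
import Mathlib

section
/- In the 3-dimensional unimodular Lie group setting, the principal Ricci curvatures with respect to the basis e1,e2,e3 are ρ1 = 2μ2μ3, ρ2 = 2μ3μ1, ρ3 = 2μ1μ2; that is, the Ricci tensor Ric(X,Y) = Σ_i ⟨R(ei,X)Y, ei⟩ satisfies Ric(e1,e1)=2μ2μ3, Ric(e2,e2)=2μ3μ1, Ric(e3,e3)=2μ1μ2, and Ric(ei,ej)=0 for i≠j. -/
def dot (x y : ℝ × ℝ × ℝ) : ℝ := x.1 * y.1 + x.2.1 * y.2.1 + x.2.2 * y.2.2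

def e1 : ℝ × ℝ × ℝ := (1, 0, 0)
def e2 : ℝ × ℝ × ℝ := (0, 1, 0)
def e3 : ℝ × ℝ × ℝ := (0, 0, 1)

def uniBracket (c1 c2 c3 : ℝ) (x y : ℝ × ℝ × ℝ) : ℝ × ℝ × ℝ :=
  (c1 * (x.2.1 * y.2.2 - x.2.2 * y.2.1),
   c2 * (x.2.2 * y.1 - x.1 * y.2.2),
   c3 * (x.1 * y.2.1 - x.2.1 * y.1))

/-- Levi-Civita connection of the unimodular Lie group, extended bilinearly. -/
def uniNabla (m1 m2 m3 : ℝ) (x y : ℝ × ℝ × ℝ) : ℝ × ℝ × ℝ :=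
  (m2 * x.2.1 * y.2.2 - m3 * x.2.2 * y.2.1,
   m3 * x.2.2 * y.1 - m1 * x.1 * y.2.2,
   m1 * x.1 * y.2.1 - m2 * x.2.1 * y.1)

/-- Curvature `R(X,Y)Z = ∇_X∇_Y Z − ∇_Y∇_X Z − ∇_{[X,Y]}Z`. -/
noncomputable def uniCurv (c1 c2 c3 : ℝ) (x y z : ℝ × ℝ × ℝ) : ℝ × ℝ × ℝ :=
  let m1 := (c1 + c2 + c3) / 2 - c1
  let m2 := (c1 + c2 + c3) / 2 - c2
  let m3 := (c1 + c2 + c3) / 2 - c3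
  uniNabla m1 m2 m3 x (uniNabla m1 m2 m3 y z)
    - uniNabla m1 m2 m3 y (uniNabla m1 m2 m3 x z)
    - uniNabla m1 m2 m3 (uniBracket c1 c2 c3 x y) z

/-- Ricci tensor `Ric(X,Y) = Σ_i ⟨R(ei,X)Y, ei⟩`. -/
noncomputable def uniRic (c1 c2 c3 : ℝ) (x y : ℝ × ℝ × ℝ) : ℝ :=
  dot (uniCurv c1 c2 c3 e1 x y) e1 + dot (uniCurv c1 c2 c3 e2 x y) e2
    + dot (uniCurv c1 c2 c3 e3 x y) e3

/-- the basis `e1,e2,e3` diagonalizes the Ricci tensor and the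
principal Ricci curvatures are `ρ1 = 2μ2μ3`, `ρ2 = 2μ3μ1`, `ρ3 = 2μ1μ2`. -/
theorem unimodular_ricci (c1 c2 c3 : ℝ) :
    let m1 := (c1 + c2 + c3) / 2 - c1
    let m2 := (c1 + c2 + c3) / 2 - c2
    let m3 := (c1 + c2 + c3) / 2 - c3
    uniRic c1 c2 c3 e1 e1 = 2 * m2 * m3 ∧
    uniRic c1 c2 c3 e2 e2 = 2 * m3 * m1 ∧
    uniRic c1 c2 c3 e3 e3 = 2 * m1 * m2 ∧
    uniRic c1 c2 c3 e1 e2 = 0 ∧ uniRic c1 c2 c3 e2 e3 = 0 ∧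
    uniRic c1 c2 c3 e3 e1 = 0 ∧ uniRic c1 c2 c3 e2 e1 = 0 ∧
    uniRic c1 c2 c3 e3 e2 = 0 ∧ uniRic c1 c2 c3 e1 e3 = 0 := by
  refine ⟨?_, ?_, ?_, ?_, ?_, ?_, ?_, ?_, ?_⟩ <;>
    simp only [uniRic, uniCurv, uniNabla, uniBracket, dot, e1, e2, e3,
      Prod.fst, Prod.snd, Prod.mk_sub_mk] <;> ring
end

section
/- In the non-unimodular Lie group G(α,β), the principal Ricci curvatures are ρ1 = −2(1+α²(1+β²)), ρ2 = −2(1+α(1+β²)), ρ3 = −2(1−α(1+β²)), and the scalar curvature equals −2(3+α²(1+β²)); in particular if α > 0 then ρ1 < −2 and the scalar curvature is negative. -/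
/-- Bracket of the non-unimodular Lie algebra `g(α,β)`. -/
def nuBracket (a b : ℝ) (x y : ℝ × ℝ × ℝ) : ℝ × ℝ × ℝ :=
  (0,
   (1 + a) * (x.1 * y.2.1 - x.2.1 * y.1) - (1 - a) * b * (x.1 * y.2.2 - x.2.2 * y.1),
   (1 + a) * b * (x.1 * y.2.1 - x.2.1 * y.1) + (1 - a) * (x.1 * y.2.2 - x.2.2 * y.1))

/-- Levi-Civita connection of `G(α,β)` on left invariant fields, extended bilinearly:
`∇_{e1}e2 = βe3`, `∇_{e1}e3 = −βe2`, `∇_{e2}e1 = −(1+α)e2−αβe3`, `∇_{e2}e2 = (1+α)e1`,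
`∇_{e2}e3 = αβe1`, `∇_{e3}e1 = −αβe2−(1−α)e3`, `∇_{e3}e2 = αβe1`, `∇_{e3}e3 = (1−α)e1`. -/
def nuNabla (a b : ℝ) (x y : ℝ × ℝ × ℝ) : ℝ × ℝ × ℝ :=
  (x.2.1 * ((1 + a) * y.2.1 + a * b * y.2.2) + x.2.2 * (a * b * y.2.1 + (1 - a) * y.2.2),
   -(x.1 * b * y.2.2) - x.2.1 * (1 + a) * y.1 - x.2.2 * a * b * y.1,
   x.1 * b * y.2.1 - x.2.1 * a * b * y.1 - x.2.2 * (1 - a) * y.1)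

/-- Curvature `R(X,Y)Z = ∇_X∇_Y Z − ∇_Y∇_X Z − ∇_{[X,Y]}Z`. -/
def nuCurv (a b : ℝ) (x y z : ℝ × ℝ × ℝ) : ℝ × ℝ × ℝ :=
  nuNabla a b x (nuNabla a b y z) - nuNabla a b y (nuNabla a b x z)
    - nuNabla a b (nuBracket a b x y) z

/-- Ricci tensor `Ric(X,Y) = Σ_i ⟨R(ei,X)Y, ei⟩`. -/
def nuRic (a b : ℝ) (x y : ℝ × ℝ × ℝ) : ℝ :=
  dot (nuCurv a b e1 x y) e1 + dot (nuCurv a b e2 x y) e2 + dot (nuCurv a b e3 x y) e3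

/-- principal Ricci curvatures and scalar curvature of `G(α,β)`. -/
theorem nonunimodular_ricci (a b : ℝ) (ha : 0 ≤ a) (hb : 0 ≤ b) :
    nuRic a b e1 e1 = -2 * (1 + a ^ 2 * (1 + b ^ 2)) ∧
    nuRic a b e2 e2 = -2 * (1 + a * (1 + b ^ 2)) ∧
    nuRic a b e3 e3 = -2 * (1 - a * (1 + b ^ 2)) ∧
    nuRic a b e1 e1 + nuRic a b e2 e2 + nuRic a b e3 e3
      = -2 * (3 + a ^ 2 * (1 + b ^ 2)) ∧
    (0 < a → nuRic a b e1 e1 < -2 ∧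
      nuRic a b e1 e1 + nuRic a b e2 e2 + nuRic a b e3 e3 < 0) := by
  have h1 : nuRic a b e1 e1 = -2 * (1 + a ^ 2 * (1 + b ^ 2)) := by
    simp only [nuRic, nuCurv, nuNabla, nuBracket, dot, e1, e2, e3, Prod.fst_sub,
      Prod.snd_sub, Prod.mk.injEq]
    ring
  have h2 : nuRic a b e2 e2 = -2 * (1 + a * (1 + b ^ 2)) := by
    simp only [nuRic, nuCurv, nuNabla, nuBracket, dot, e1, e2, e3, Prod.fst_sub,
      Prod.snd_sub, Prod.mk.injEq]
    ring
  have h3 : nuRic a b e3 e3 = -2 * (1 - a * (1 + b ^ 2)) := by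
    simp only [nuRic, nuCurv, nuNabla, nuBracket, dot, e1, e2, e3, Prod.fst_sub,
      Prod.snd_sub, Prod.mk.injEq]
    ring
  refine ⟨h1, h2, h3, by rw [h1, h2, h3]; ring, fun hpos => ⟨?_, ?_⟩⟩
  · rw [h1]; nlinarith [sq_nonneg b, sq_nonneg a, mul_pos hpos hpos]
  · rw [h1, h2, h3]; nlinarith [sq_nonneg b, sq_nonneg a]
end

section
/- In the non-unimodular Lie group G(α,β), for X = x1e1 + x2e2 + x3e3 the rough Laplacian satisfies Δ̄X = 2x1(1+α²+α²β²) e1 + [x2(β²+(1+α)²+α²β²) − 2x3β(1−α)] e2 + [x3(β²+(1−α)²+α²β²) + 2x2β(1+α)] e3, where Δ̄X = −Σ_i (∇_{ei}∇_{ei}X − ∇_{∇_{ei}ei}X). -/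
/-- Rough Laplacian `Δ̄X = −Σ_i (∇_{ei}∇_{ei}X − ∇_{∇_{ei}ei}X)`. -/
def nuRoughLap (a b : ℝ) (x : ℝ × ℝ × ℝ) : ℝ × ℝ × ℝ :=
  -((nuNabla a b e1 (nuNabla a b e1 x) - nuNabla a b (nuNabla a b e1 e1) x)
    + (nuNabla a b e2 (nuNabla a b e2 x) - nuNabla a b (nuNabla a b e2 e2) x)
    + (nuNabla a b e3 (nuNabla a b e3 x) - nuNabla a b (nuNabla a b e3 e3) x))

/-- the rough Laplacian of `X = x1 e1 + x2 e2 + x3 e3` in `G(α,β)`. -/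
theorem nonunimodular_rough_laplacian (a b x1 x2 x3 : ℝ) :
    nuRoughLap a b (x1 • e1 + x2 • e2 + x3 • e3) =
      (2 * x1 * (1 + a ^ 2 + a ^ 2 * b ^ 2)) • e1
        + (x2 * (b ^ 2 + (1 + a) ^ 2 + a ^ 2 * b ^ 2) - 2 * x3 * b * (1 - a)) • e2
        + (x3 * (b ^ 2 + (1 - a) ^ 2 + a ^ 2 * b ^ 2) + 2 * x2 * b * (1 + a)) • e3 := by
  simp only [nuRoughLap, nuNabla, e1, e2, e3, Prod.smul_mk, Prod.mk_add_mk, Prod.neg_mk, Prod.mk_sub_mk, smul_eq_mul]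
  refine Prod.ext (by ring) (Prod.ext (by ring) (by ring))
end

section
/- For α = 1 and β ≠ 0, the unit vector X = (e2 + β e3)/√(β²+1) satisfies the full magnetic system of G(1,β) with charge q = 4/(β²+2) − 2β² − 6, and this q is never zero. -/
/-- for `α = 1`, `β ≠ 0`, the unit vector
`X = (e2 + β e3)/√(β²+1)` (i.e. `x1 = 0`, `x2 = 1/√(β²+1)`, `x3 = β/√(β²+1)`)
satisfies the magnetic system of `G(1,β)` with charge
`q = 4/(β²+2) − 2β² − 6`, and this `q` is never zero. -/
theorem bcv_magnetic_vector (b : ℝ) (hb : b ≠ 0) :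
    let x2 := 1 / Real.sqrt (b ^ 2 + 1)
    let x3 := b / Real.sqrt (b ^ 2 + 1)
    let q := 4 / (b ^ 2 + 2) - 2 * b ^ 2 - 6
    let N := 2 * b ^ 2 + 4 * x2 ^ 2 + 4 * x2 * x3 * b
    (-(2 * x2 + b * x3) * x2 * (3 * b ^ 2 + 4) + x2 * x3 * b ^ 3
        = q * (2 * x2 ^ 2 + b * x2 * x3)) ∧
    2 * x2 * (b ^ 2 + 2) = N * x2 ∧
    2 * x3 * b ^ 2 + 4 * x2 * b = N * x3 ∧
    ¬ (q = 0) := by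
  intro x2 x3 q N
  have h1 : (0:ℝ) < b ^ 2 + 1 := by positivity
  have hs : Real.sqrt (b ^ 2 + 1) > 0 := Real.sqrt_pos.mpr h1
  have hsq : Real.sqrt (b ^ 2 + 1) ^ 2 = b ^ 2 + 1 := Real.sq_sqrt (le_of_lt h1)
  have h2 : (0:ℝ) < b ^ 2 + 2 := by positivity
  refine ⟨?_, ?_, ?_, ?_⟩
  · show -(2 * x2 + b * x3) * x2 * (3 * b ^ 2 + 4) + x2 * x3 * b ^ 3
        = q * (2 * x2 ^ 2 + b * x2 * x3)
    simp only [x2, x3, q]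
    field_simp
    nlinarith [hsq, sq_nonneg b]
  · show 2 * x2 * (b ^ 2 + 2) = N * x2
    simp only [x2, x3, N]
    field_simp
    nlinarith [hsq]
  · show 2 * x3 * b ^ 2 + 4 * x2 * b = N * x3
    simp only [x2, x3, N]
    field_simp
    nlinarith [hsq]
  · show ¬ (q = 0)
    have : q = -2 * (b ^ 2 + 1) * (b ^ 2 + 4) / (b ^ 2 + 2) := by
      simp only [q]; field_simp; ring
    rw [this]
    have : -2 * (b ^ 2 + 1) * (b ^ 2 + 4) < 0 := by nlinarith
    exact ne_of_lt (div_neg_of_neg_of_pos this h2)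
end
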